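/- Let N ∈ ℕ, let α : Fin N → ℝ, let c₁ > 0 and c₂ > 0 be real, let ℓ ∈ ℕ with 1 ≤ ℓ ≤ N + 1, define θ_k = α_k + 2π for the first ℓ − 1 indices k and θ_k = α_k otherwise, and define F_ℓ : ℂ → ℂ by F_ℓ(s) = exp(−s · log c₁) · ζ_R(c₂ · s) · Σ_{k=0}^{N−1} exp(−i·θ_k·s), where ζ_R is the Riemann zeta function. Then F_ℓ is differentiable at 0 and F_ℓ′(0) = (N/2)·log c₁ − (N·c₂/2)·log(2π) + iπ(ℓ − 1) + (i/2)·Σ_{k=0}^{N−1} α_k. -/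

import Mathlib

open Complex Real

/-!
All three factors of `F` are holomorphic at `0`, with values `1`, `ζ(0) = -1/2` and `N`, and
derivatives `-log c₁`, `c₂ ζ'(0) = -c₂ log(2π)/2` and `-i Σ θ_k`; the product rule gives `F'(0)`.
Shifting the first `ℓ - 1` angles by `2π` adds `2π(ℓ - 1)` to `Σ θ_k`, which is the source of the
term `iπ(ℓ - 1)`.
-/

lemma hasDerivAt_riemannZeta_zero :
    HasDerivAt riemannZeta (-Real.log (2 * π) / 2) 0 := by
  have h := (differentiableAt_riemannZeta (s := 0) zero_ne_one).hasDerivAt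
  rwa [deriv_riemannZeta_zero, ← ofReal_ofNat, ← ofReal_mul,
    ← ofReal_log (by positivity)] at h

lemma hasDerivAt_riemannZeta_const_mul_zero (c : ℂ) :
    HasDerivAt (fun s : ℂ => riemannZeta (c * s)) (c * (-Real.log (2 * π) / 2)) 0 := by
  have hζ : HasDerivAt riemannZeta (-Real.log (2 * π) / 2) (c * 0) := by
    simpa using hasDerivAt_riemannZeta_zero
  have hlin : HasDerivAt (fun s : ℂ => c * s) c 0 := by
    simpa using (hasDerivAt_id (0 : ℂ)).const_mul c
  exact (hζ.comp 0 hlin).congr_deriv (mul_comm _ _)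

lemma hasDerivAt_cexp_neg_mul_zero (a : ℂ) :
    HasDerivAt (fun s : ℂ => exp (-s * a)) (-a) 0 := by
  simpa using ((hasDerivAt_id (0 : ℂ)).neg.mul_const a).cexp

lemma hasDerivAt_sum_cexp_neg_I_mul_zero {ι : Type*} [Fintype ι] (θ : ι → ℂ) :
    HasDerivAt (fun s : ℂ => ∑ k, exp (-(I * θ k * s))) (-(I * ∑ k, θ k)) 0 := by
  rw [Finset.mul_sum, ← Finset.sum_neg_distrib]
  refine HasDerivAt.fun_sum fun k _ => ?_
  simpa using ((hasDerivAt_id (0 : ℂ)).const_mul (I * θ k)).neg.cexp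

lemma Fin.sum_ite_val_lt_add {M : Type*} [AddCommMonoid M] {N m : ℕ} (hm : m ≤ N)
    (a : Fin N → M) (c : M) :
    ∑ k : Fin N, (if (k : ℕ) < m then a k + c else a k) = ∑ k, a k + m • c := by
  have hsplit : ∀ k : Fin N,
      (if (k : ℕ) < m then a k + c else a k) = a k + if (k : ℕ) < m then c else 0 := by
    intro k
    split_ifs <;> simp
  simp only [hsplit, Finset.sum_add_distrib, Finset.sum_ite, Finset.sum_const_zero, add_zero,
    Finset.sum_const, Fin.card_filter_val_lt, min_eq_right hm]

theorem power_growth_zeta_deriv_at_zero_general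
    (N : ℕ) (α : Fin N → ℝ) (c₁ c₂ : ℝ)
    (ℓ : ℕ) (hℓ₁ : 1 ≤ ℓ) (hℓ₂ : ℓ ≤ N + 1)
    (θ : Fin N → ℝ)
    (hθ : ∀ k : Fin N, θ k = if (k : ℕ) < ℓ - 1 then α k + 2 * Real.pi else α k)
    (F : ℂ → ℂ)
    (hF : ∀ s : ℂ, F s = Complex.exp (-s * Real.log c₁) * riemannZeta (c₂ * s) *
      ∑ k : Fin N, Complex.exp (-(Complex.I * θ k * s))) :
    DifferentiableAt ℂ F 0 ∧
      deriv F 0 = (N : ℂ) / 2 * Real.log c₁ - (N : ℂ) * c₂ / 2 * Real.log (2 * Real.pi) +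
        Complex.I * Real.pi * ((ℓ : ℂ) - 1) + Complex.I / 2 * ∑ k : Fin N, (α k : ℂ) := by
  have hθsum : ∑ k, θ k = ∑ k, α k + 2 * π * (ℓ - 1) := by
    rw [funext hθ, Fin.sum_ite_val_lt_add (by omega) α (2 * π), nsmul_eq_mul, Nat.cast_sub hℓ₁]
    push_cast
    ring
  have hF' := ((hasDerivAt_cexp_neg_mul_zero (Real.log c₁)).fun_mul
    (hasDerivAt_riemannZeta_const_mul_zero c₂)).fun_mul
    (hasDerivAt_sum_cexp_neg_I_mul_zero fun k => (θ k : ℂ))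
  rw [funext hF]
  refine ⟨hF'.differentiableAt, hF'.deriv.trans ?_⟩
  simp only [neg_zero, zero_mul, mul_zero, Complex.exp_zero, riemannZeta_zero, Finset.sum_const,
    Finset.card_univ, Fintype.card_fin, nsmul_eq_mul, ← ofReal_sum, hθsum]
  push_cast
  ring

/-- The continued spectral zeta function
`F_ℓ(s) = exp(−s log c₁) ζ_R(c₂ s) Σ_k exp(−iθ_k s)` for eigenvalues with power growth
on `N` rays is differentiable at `0` with
`F_ℓ′(0) = (N/2) log c₁ − (N c₂/2) log(2π) + iπ(ℓ−1) + (i/2) Σ_k α_k`. -/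
theorem power_growth_zeta_deriv_at_zero
    (N : ℕ) (α : Fin N → ℝ) (c₁ c₂ : ℝ) (hc₁ : 0 < c₁) (hc₂ : 0 < c₂)
    (ℓ : ℕ) (hℓ₁ : 1 ≤ ℓ) (hℓ₂ : ℓ ≤ N + 1)
    (θ : Fin N → ℝ)
    (hθ : ∀ k : Fin N, θ k = if (k : ℕ) < ℓ - 1 then α k + 2 * Real.pi else α k)
    (F : ℂ → ℂ)
    (hF : ∀ s : ℂ, F s = Complex.exp (-s * Real.log c₁) * riemannZeta (c₂ * s) *
      ∑ k : Fin N, Complex.exp (-(Complex.I * θ k * s))) :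
    DifferentiableAt ℂ F 0 ∧
      deriv F 0 = (N : ℂ) / 2 * Real.log c₁ - (N : ℂ) * c₂ / 2 * Real.log (2 * Real.pi) +
        Complex.I * Real.pi * ((ℓ : ℂ) - 1) + Complex.I / 2 * ∑ k : Fin N, (α k : ℂ) :=
  power_growth_zeta_deriv_at_zero_general N α c₁ c₂ ℓ hℓ₁ hℓ₂ θ hθ F hF
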